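/- Fix d, h ∈ ℕ and set |Λ^n| := (2n)^d. Let {S^n}_{n∈ℕ} be an exponentially nearly additive ℝ^h-valued process, and suppose the process {S^n/|Λ^n|}_{n∈ℕ} satisfies an LDP with speed |Λ^n| and rate function I : ℝ^h → [0,∞]. Then I is convex: for all x₁, x₂ ∈ ℝ^h and t ∈ (0,1), t·I(x₁) + (1−t)·I(x₂) ≥ I(t·x₁ + (1−t)·x₂). -/

import Mathlib

/-!
Cut the box of side `(2m+1)k` into `(2m+1)^d` blocks of side `k`. Up to an event of
super-exponentially small probability, near additivity makes `S` on the big box the sum of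
independent copies of `S^{k-r}`, one per block. Asking the normalized copies in a fraction `t` of
the blocks to lie near `x` and the others near `y` costs, by the LDP lower bound and independence,
about `exp (-|Λ| (t I(x) + (1-t) I(y)))`, and on that event the normalized total lies near
`t x + (1-t) y`. The LDP upper bound on small closed balls around `t x + (1-t) y` and lower
semicontinuity of `I` then give `I (t x + (1-t) y) ≤ t I(x) + (1-t) I(y)`.
-/

open MeasureTheory Filter
open scoped ENNReal RealInnerProductSpace

namespace RandomCubical

variable {Ω : Type*} [MeasurableSpace Ω]

/-- `|Λ^n| = (2n)^d`. -/
noncomputable def vol (d n : ℕ) : ℝ := (2 * (n : ℝ)) ^ d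

/-- The lattice box `ℤ^d ∩ [-m, m]^d`. -/
noncomputable def box (d m : ℕ) : Finset (Fin d → ℤ) :=
  Fintype.piFinset fun _ => Finset.Icc (-(m : ℤ)) (m : ℤ)

/-- The conditions of exponential `r`-near additivity, for a given witness family
`T n z` (`z ∈ ℤ^d`) of independent copies of `S n`. -/
def ExpNAWitness (d h : ℕ) (P : Measure Ω) (S : ℕ → Ω → EuclideanSpace ℝ (Fin h))
    (r : ℕ) (T : ℕ → (Fin d → ℤ) → Ω → EuclideanSpace ℝ (Fin h)) : Prop :=
  (∀ n, 1 ≤ n → ProbabilityTheory.iIndepFun (T n) P) ∧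
  (∀ n, 1 ≤ n → ∀ z, ProbabilityTheory.IdentDistrib (T n z) (S n) P P) ∧
  ∀ ε > (0 : ℝ), ∀ C > (0 : ℝ), ∃ K : ℕ, r < K ∧ ∀ k, K ≤ k → ∀ m : ℕ, 1 ≤ m →
    P {ω | ε * vol d ((2 * m + 1) * k) <
        ‖S ((2 * m + 1) * k) ω - ∑ z ∈ box d m, T (k - r) z ω‖} ≤
      ENNReal.ofReal (Real.exp (-C * vol d ((2 * m + 1) * k)))

/-- Exponentially nearly additive process. -/
def ExpNearlyAdditive (d h : ℕ) (P : Measure Ω)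
    (S : ℕ → Ω → EuclideanSpace ℝ (Fin h)) : Prop :=
  ∃ r T, ExpNAWitness d h P S r T

/-- Exponentially regular process. -/
def ExpRegular (d h : ℕ) (P : Measure Ω) (S : ℕ → Ω → EuclideanSpace ℝ (Fin h)) : Prop :=
  ∀ k, 1 ≤ k → ∀ ε > (0 : ℝ), ∀ C > (0 : ℝ), ∃ N : ℕ, ∀ n, N ≤ n → ∀ m : ℕ,
    (2 * m + 1) * k ≤ n → n < (2 * m + 3) * k →
    P {ω | ε * vol d n < ‖S n ω - S ((2 * m + 1) * k) ω‖} ≤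
      ENNReal.ofReal (Real.exp (-C * vol d n))

/-- The (Donsker–Varadhan) large deviation principle with speed `a n` and rate function `I`. -/
def IsLDP {X : Type*} [TopologicalSpace X] (P : Measure Ω) (a : ℕ → ℝ)
    (T : ℕ → Ω → X) (I : X → ℝ≥0∞) : Prop :=
  LowerSemicontinuous I ∧
  (∀ F : Set X, IsClosed F →
    limsup (fun n => (((a n)⁻¹ : ℝ) : EReal) * ENNReal.log (P {ω | T n ω ∈ F})) atTop
      ≤ -((⨅ x ∈ F, I x : ℝ≥0∞) : EReal)) ∧
  (∀ G : Set X, IsOpen G →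
    -((⨅ x ∈ G, I x : ℝ≥0∞) : EReal)
      ≤ liminf (fun n => (((a n)⁻¹ : ℝ) : EReal) * ENNReal.log (P {ω | T n ω ∈ G})) atTop)

/-- Good rate function: lower semicontinuous with compact sublevel sets. -/
def GoodRate {X : Type*} [TopologicalSpace X] (I : X → ℝ≥0∞) : Prop :=
  LowerSemicontinuous I ∧ ∀ α : ℝ≥0∞, α ≠ ⊤ → IsCompact {x | I x ≤ α}

/-- Convexity for a `[0,∞]`-valued function on a real vector space. -/
def ENNConvex {V : Type*} [AddCommGroup V] [Module ℝ V] (I : V → ℝ≥0∞) : Prop :=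
  ∀ x y : V, ∀ t : ℝ, 0 < t → t < 1 →
    I (t • x + (1 - t) • y) ≤ ENNReal.ofReal t * I x + ENNReal.ofReal (1 - t) * I y

/-- The Fenchel–Legendre transform of `φ : ℝ^h → ℝ`, as a `[0,∞]`-valued function. -/
noncomputable def FL {h : ℕ} (φ : EuclideanSpace ℝ (Fin h) → ℝ)
    (x : EuclideanSpace ℝ (Fin h)) : ℝ≥0∞ :=
  ⨆ lam : EuclideanSpace ℝ (Fin h), ENNReal.ofReal (⟪lam, x⟫ - φ lam)

/-- `E[exp ⟪λ, S^n⟫]`, as an extended nonnegative real. -/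
noncomputable def expMoment {h : ℕ} (P : Measure Ω) (S : ℕ → Ω → EuclideanSpace ℝ (Fin h))
    (lam : EuclideanSpace ℝ (Fin h)) (n : ℕ) : ℝ≥0∞ :=
  ∫⁻ ω, ENNReal.ofReal (Real.exp ⟪lam, S n ω⟫) ∂P

open ProbabilityTheory
open scoped Finset Topology

theorem _root_.ENNReal.ofReal_exp_mul_le_iff {p : ℝ≥0∞} {b V : ℝ} (hV : 0 < V) :
    ENNReal.ofReal (Real.exp (b * V)) ≤ p ↔
      (b : EReal) ≤ ((V⁻¹ : ℝ) : EReal) * ENNReal.log p := by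
  rw [← ENNReal.log_le_log_iff, ENNReal.log_ofReal_of_pos (Real.exp_pos _), Real.log_exp,
    EReal.coe_inv, mul_comm _ (ENNReal.log p), ← div_eq_mul_inv,
    EReal.le_div_iff_mul_le (by exact_mod_cast hV) (EReal.coe_ne_top V), EReal.coe_mul]

theorem _root_.ENNReal.ofReal_exp_neg_le_sub {p q : ℝ} (h : 1 ≤ q - p) :
    ENNReal.ofReal (Real.exp (-q)) ≤
      ENNReal.ofReal (Real.exp (-p)) - ENNReal.ofReal (Real.exp (-q)) := by
  rw [← ENNReal.ofReal_sub _ (Real.exp_pos _).le]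
  refine ENNReal.ofReal_le_ofReal ?_
  have hq : Real.exp (-q) * Real.exp 1 ≤ Real.exp (-p) := by
    rw [← Real.exp_add]
    exact Real.exp_le_exp.2 (by linarith)
  nlinarith [Real.exp_pos (-q), Real.add_one_le_exp 1]

theorem _root_.ENNReal.le_ofReal_mul_add_ofReal_mul {a b c : ℝ≥0∞} {t : ℝ} (ht0 : 0 < t)
    (ht1 : t < 1)
    (h : ∀ α β γ : ℝ, a < ENNReal.ofReal α → b < ENNReal.ofReal β →
      t * α + (1 - t) * β < γ → c ≤ ENNReal.ofReal γ) :
    c ≤ ENNReal.ofReal t * a + ENNReal.ofReal (1 - t) * b := by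
  rcases eq_or_ne a ⊤ with rfl | ha
  · simp [ENNReal.mul_top, ht0]
  rcases eq_or_ne b ⊤ with rfl | hb
  · simp [ENNReal.mul_top, ht1]
  refine ENNReal.le_of_forall_pos_le_add fun ε hε _ => ?_
  have h1t : 0 ≤ 1 - t := by linarith
  have hε' : (0 : ℝ) < ε := hε
  calc c ≤ ENNReal.ofReal (t * a.toReal + (1 - t) * b.toReal + ε) := by
        refine h (a.toReal + ε / 2) (b.toReal + ε / 2) _ ?_ ?_ (by nlinarith)
        · exact (ENNReal.lt_ofReal_iff_toReal_lt ha).2 (by linarith)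
        · exact (ENNReal.lt_ofReal_iff_toReal_lt hb).2 (by linarith)
    _ = ENNReal.ofReal t * a + ENNReal.ofReal (1 - t) * b + ε := by
        rw [ENNReal.ofReal_add (by positivity) hε'.le, ENNReal.ofReal_add (by positivity)
          (by positivity), ENNReal.ofReal_mul ht0.le, ENNReal.ofReal_mul h1t,
          ENNReal.ofReal_toReal ha, ENNReal.ofReal_toReal hb, ENNReal.ofReal_coe_nnreal]

theorem abs_floor_mul_div_sub_le {t N : ℝ} (ht : 0 ≤ t) (hN : 0 < N) :
    |⌊t * N⌋₊ / N - t| ≤ N⁻¹ := by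
  have h1 : (⌊t * N⌋₊ : ℝ) / N ≤ t := (div_le_iff₀ hN).2 (Nat.floor_le (by positivity))
  have h2 : t ≤ (⌊t * N⌋₊ : ℝ) / N + N⁻¹ := by
    rw [← one_div, ← add_div, le_div_iff₀ hN]
    exact (Nat.lt_floor_add_one _).le
  rw [abs_sub_le_iff]
  constructor <;> linarith [inv_pos.2 hN]

theorem floor_mul_mul_add_sub_mul_le {t N a a' : ℝ} (ht : 0 ≤ t) (hN : 0 ≤ N) (ha : 0 ≤ a)
    (ha' : 0 ≤ a') :
    ⌊t * N⌋₊ * a + (N - ⌊t * N⌋₊) * a' ≤ N * (t * a + (1 - t) * a') + a' := by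
  have h1 : (⌊t * N⌋₊ : ℝ) ≤ t * N := Nat.floor_le (by positivity)
  have h2 : t * N < ⌊t * N⌋₊ + 1 := Nat.lt_floor_add_one _
  nlinarith

theorem _root_.LowerSemicontinuous.le_of_forall_iInf_closedBall_le {X β : Type*}
    [PseudoMetricSpace X] [CompleteLinearOrder β] [DenselyOrdered β] {f : X → β}
    (hf : LowerSemicontinuous f) {x : X} {c : β}
    (h : ∀ δ > 0, ⨅ y ∈ Metric.closedBall x δ, f y ≤ c) : f x ≤ c := by
  by_contra! hc
  obtain ⟨c', hcc', hc'⟩ := exists_between hc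
  obtain ⟨δ, hδ, hball⟩ := Metric.eventually_nhds_iff.1 (hf x c' hc')
  refine (h (δ / 2) (half_pos hδ)).not_gt (hcc'.trans_le (le_iInf₂ fun y hy => (hball ?_).le))
  exact (Metric.mem_closedBall.1 hy).trans_lt (half_lt_self hδ)

section LDP

variable {X : Type*} [TopologicalSpace X] {P : Measure Ω} {a : ℕ → ℝ} {T : ℕ → Ω → X}
  {I : X → ℝ≥0∞}

theorem IsLDP.eventually_ofReal_exp_le (hI : IsLDP P a T I) (ha : ∀ᶠ n in atTop, 0 < a n)
    {G : Set X} (hG : IsOpen G) {x : X} (hx : x ∈ G) {b : ℝ} (hb : I x < ENNReal.ofReal b) :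
    ∀ᶠ n in atTop, ENNReal.ofReal (Real.exp (-b * a n)) ≤ P {ω | T n ω ∈ G} := by
  have hb0 : 0 < b := ENNReal.ofReal_pos.1 (zero_le.trans_lt hb)
  have hlt : ((-b : ℝ) : EReal) < -((⨅ x ∈ G, I x : ℝ≥0∞) : EReal) := by
    rw [EReal.coe_neg, EReal.neg_lt_neg_iff, ← max_eq_left hb0.le, ← EReal.coe_ennreal_ofReal,
      EReal.coe_ennreal_lt_coe_ennreal_iff]
    exact (biInf_le I hx).trans_lt hb
  filter_upwards [eventually_lt_of_lt_liminf (hlt.trans_le (hI.2.2 G hG)), ha] with n hn han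
  exact (ENNReal.ofReal_exp_mul_le_iff han).2 hn.le

theorem IsLDP.iInf_le_of_frequently (hI : IsLDP P a T I) (ha : ∀ᶠ n in atTop, 0 < a n)
    {F : Set X} (hF : IsClosed F) {b : ℝ}
    (h : ∃ᶠ n in atTop, ENNReal.ofReal (Real.exp (-b * a n)) ≤ P {ω | T n ω ∈ F}) :
    ⨅ x ∈ F, I x ≤ ENNReal.ofReal b := by
  have hle : ((-b : ℝ) : EReal) ≤ -((⨅ x ∈ F, I x : ℝ≥0∞) : EReal) :=
    (le_limsup_of_frequently_le' ((h.and_eventually ha).mono fun n hn =>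
      (ENNReal.ofReal_exp_mul_le_iff hn.2).1 hn.1)).trans (hI.2.1 F hF)
  rw [EReal.coe_neg, EReal.neg_le_neg_iff] at hle
  rw [← EReal.coe_ennreal_le_coe_ennreal_iff, EReal.coe_ennreal_ofReal]
  exact hle.trans (EReal.coe_le_coe_iff.2 (le_max_left _ _))

end LDP

theorem _root_.ProbabilityTheory.iIndepFun.measure_iInter_preimage_ite {ι β : Type*}
    [MeasurableSpace β] [DecidableEq ι] {P : Measure Ω} {X : ι → Ω → β} {Y : Ω → β}
    (hind : iIndepFun X P) (hid : ∀ i, IdentDistrib (X i) Y P P) {B A : Finset ι} (hA : A ⊆ B)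
    {G G' : Set β} (hG : MeasurableSet G) (hG' : MeasurableSet G') :
    P (⋂ i ∈ B, X i ⁻¹' if i ∈ A then G else G') =
      P (Y ⁻¹' G) ^ #A * P (Y ⁻¹' G') ^ #(B \ A) := by
  rw [hind.measure_inter_preimage_eq_mul B fun i _ => by split_ifs <;> assumption,
    ← Finset.prod_sdiff hA, mul_comm]
  congr 1
  · rw [Finset.prod_congr rfl fun i hi => by rw [if_pos hi, (hid i).measure_mem_eq hG],
      Finset.prod_const]
  · rw [Finset.prod_congr rfl fun i hi => by
      rw [if_neg (Finset.mem_sdiff.1 hi).2, (hid i).measure_mem_eq hG'], Finset.prod_const]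

section Blocks

variable {E ι : Type*} [NormedAddCommGroup E] [NormedSpace ℝ E] [DecidableEq ι]
  {B A : Finset ι} {x y : E} {t v w ε : ℝ}

theorem dist_average_le_of_forall_dist_le (hA : A ⊆ B) (hB : B.Nonempty) {u : ι → E}
    (hux : ∀ i ∈ A, dist (u i) x ≤ ε) (huy : ∀ i ∈ B \ A, dist (u i) y ≤ ε) :
    dist ((#B : ℝ)⁻¹ • ∑ i ∈ B, u i) (t • x + (1 - t) • y) ≤
      ε + |#A / #B - t| * ‖x - y‖ := by
  have hN : (0 : ℝ) < #B := by exact_mod_cast hB.card_pos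
  have hcard : (#(B \ A) : ℝ) = #B - #A := by
    rw [Finset.card_sdiff_of_subset hA, Nat.cast_sub (Finset.card_le_card hA)]
  have hsplit : ∑ i ∈ B, u i - ((#A : ℝ) • x + ((#B : ℝ) - #A) • y) =
      ∑ i ∈ B \ A, (u i - y) + ∑ i ∈ A, (u i - x) := by
    rw [← Finset.sum_sdiff hA, Finset.sum_sub_distrib, Finset.sum_sub_distrib,
      Finset.sum_const, Finset.sum_const, ← Nat.cast_smul_eq_nsmul ℝ,
      ← Nat.cast_smul_eq_nsmul ℝ, hcard]
    abel
  have hsum : ‖∑ i ∈ B, u i - ((#A : ℝ) • x + ((#B : ℝ) - #A) • y)‖ ≤ #B * ε :=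
    calc _ ≤ ∑ i ∈ B \ A, ‖u i - y‖ + ∑ i ∈ A, ‖u i - x‖ := by
          rw [hsplit]
          exact (norm_add_le _ _).trans (add_le_add (norm_sum_le _ _) (norm_sum_le _ _))
      _ ≤ ∑ i ∈ B \ A, ε + ∑ i ∈ A, ε := by
          gcongr with i hi i hi
          · exact (dist_eq_norm _ _).symm.trans_le (huy i hi)
          · exact (dist_eq_norm _ _).symm.trans_le (hux i hi)
      _ = #B * ε := by
          rw [Finset.sum_const, Finset.sum_const, nsmul_eq_mul, nsmul_eq_mul, hcard]
          ring
  have hid : (#B : ℝ)⁻¹ • ∑ i ∈ B, u i - (t • x + (1 - t) • y) =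
      (#B : ℝ)⁻¹ • (∑ i ∈ B, u i - ((#A : ℝ) • x + ((#B : ℝ) - #A) • y)) +
        ((#A : ℝ) / #B - t) • (x - y) := by
    match_scalars <;> field_simp <;> ring
  rw [dist_eq_norm, hid]
  refine (norm_add_le _ _).trans (add_le_add ?_ (norm_smul _ _).le)
  rw [norm_smul, Real.norm_of_nonneg (by positivity)]
  calc (#B : ℝ)⁻¹ * _ ≤ (#B : ℝ)⁻¹ * (#B * ε) := by gcongr
    _ = ε := by field_simp

theorem dist_smul_sum_le_of_blocks (hA : A ⊆ B) (hB : B.Nonempty) {X : ι → E} {s : E}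
    (hv : 0 < v) (hvw : v ≤ w)
    (hX : ∀ i ∈ A, dist (v⁻¹ • X i) x ≤ ε) (hY : ∀ i ∈ B \ A, dist (v⁻¹ • X i) y ≤ ε)
    (hs : ‖s - ∑ i ∈ B, X i‖ ≤ ε * (#B * w))
    (hρ : (1 - v / w) * ‖t • x + (1 - t) • y‖ ≤ ε)
    (hθ : |#A / #B - t| * ‖x - y‖ ≤ ε) :
    dist ((#B * w)⁻¹ • s) (t • x + (1 - t) • y) ≤ 4 * ε := by
  set z := t • x + (1 - t) • y
  set U := (#B : ℝ)⁻¹ • ∑ i ∈ B, v⁻¹ • X i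
  have hN : (0 : ℝ) < #B := by exact_mod_cast hB.card_pos
  have hw : 0 < w := hv.trans_le hvw
  have hρ0 : 0 ≤ v / w := by positivity
  have hρ1 : v / w ≤ 1 := (div_le_one hw).2 hvw
  have hU : dist U z ≤ 2 * ε := by
    linarith [dist_average_le_of_forall_dist_le (t := t) hA hB hX hY]
  -- `∑ X i = v • ∑ v⁻¹ • X i`, so the normalized block sum is `(v / w) • U`
  have hid : (#B * w)⁻¹ • s - z =
      (#B * w)⁻¹ • (s - ∑ i ∈ B, X i) + (v / w) • (U - z) - (1 - v / w) • z := by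
    simp only [U, ← Finset.smul_sum, smul_smul]
    match_scalars <;> field_simp <;> ring
  rw [dist_eq_norm, hid]
  calc _ ≤ ‖(#B * w)⁻¹ • (s - ∑ i ∈ B, X i)‖ + ‖(v / w) • (U - z)‖ +
        ‖(1 - v / w) • z‖ := norm_sub_le_of_le (norm_add_le _ _) le_rfl
    _ ≤ ε + 2 * ε + ε := by
        rw [norm_smul, norm_smul, norm_smul, Real.norm_of_nonneg (by positivity),
          Real.norm_of_nonneg hρ0, Real.norm_of_nonneg (by linarith), ← dist_eq_norm U z]
        refine add_le_add (add_le_add ?_ ?_) hρ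
        · calc (#B * w)⁻¹ * ‖s - ∑ i ∈ B, X i‖ ≤ (#B * w)⁻¹ * (ε * (#B * w)) := by gcongr
            _ = ε := by field_simp
        · nlinarith [dist_nonneg (x := U) (y := z)]
    _ = 4 * ε := by ring

variable [MeasurableSpace E] [OpensMeasurableSpace E] {P : Measure Ω} {X : ι → Ω → E}
  {Y Z : Ω → E} {V ax ay b : ℝ}

theorem ofReal_exp_le_measure_closedBall_of_blocks (hA : A ⊆ B) (hB : B.Nonempty)
    (hind : iIndepFun X P) (hid : ∀ i, IdentDistrib (X i) Y P P)
    (hv : 0 < v) (hvw : v ≤ w) (hV : V = #B * w)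
    (hpx : ENNReal.ofReal (Real.exp (-ax * v)) ≤ P {ω | v⁻¹ • Y ω ∈ Metric.ball x ε})
    (hpy : ENNReal.ofReal (Real.exp (-ay * v)) ≤ P {ω | v⁻¹ • Y ω ∈ Metric.ball y ε})
    (hbad : P {ω | ε * V < ‖Z ω - ∑ i ∈ B, X i ω‖} ≤ ENNReal.ofReal (Real.exp (-b * V)))
    (hexp : (#A * ax + #(B \ A) * ay) * v + 1 ≤ b * V)
    (hρ : (1 - v / w) * ‖t • x + (1 - t) • y‖ ≤ ε)
    (hθ : |#A / #B - t| * ‖x - y‖ ≤ ε) :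
    ENNReal.ofReal (Real.exp (-b * V)) ≤
      P {ω | V⁻¹ • Z ω ∈ Metric.closedBall (t • x + (1 - t) • y) (4 * ε)} := by
  set Gx := (v⁻¹ • ·) ⁻¹' Metric.ball x ε
  set Gy := (v⁻¹ • ·) ⁻¹' Metric.ball y ε
  have hGx : MeasurableSet Gx :=
    (Metric.isOpen_ball.preimage (continuous_const_smul _)).measurableSet
  have hGy : MeasurableSet Gy :=
    (Metric.isOpen_ball.preimage (continuous_const_smul _)).measurableSet
  set good := ⋂ i ∈ B, X i ⁻¹' if i ∈ A then Gx else Gy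
  set bad := {ω | ε * V < ‖Z ω - ∑ i ∈ B, X i ω‖}
  have hgood : ENNReal.ofReal (Real.exp (-((#A * ax + #(B \ A) * ay) * v))) ≤ P good := by
    rw [hind.measure_iInter_preimage_ite hid hA hGx hGy]
    calc _ = ENNReal.ofReal (Real.exp (-ax * v)) ^ #A *
          ENNReal.ofReal (Real.exp (-ay * v)) ^ #(B \ A) := by
          rw [← ENNReal.ofReal_pow (Real.exp_pos _).le, ← ENNReal.ofReal_pow (Real.exp_pos _).le,
            ← ENNReal.ofReal_mul (by positivity), ← Real.exp_nat_mul, ← Real.exp_nat_mul,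
            ← Real.exp_add]
          ring_nf
      _ ≤ _ := by gcongr <;> assumption
  have hincl : good \ bad ⊆
      {ω | V⁻¹ • Z ω ∈ Metric.closedBall (t • x + (1 - t) • y) (4 * ε)} := by
    rintro ω ⟨hω, hbadω⟩
    simp only [good, Set.mem_iInter, Set.mem_preimage] at hω
    rw [Set.mem_ofPred_eq, hV, Metric.mem_closedBall]
    refine dist_smul_sum_le_of_blocks (X := fun i => X i ω) hA hB hv hvw (fun i hi => ?_)
      (fun i hi => ?_) ?_ hρ hθ
    · have := hω i (hA hi)
      rw [if_pos hi] at this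
      exact (Metric.mem_ball.1 this).le
    · have := hω i (Finset.mem_sdiff.1 hi).1
      rw [if_neg (Finset.mem_sdiff.1 hi).2] at this
      exact (Metric.mem_ball.1 this).le
    · rw [← hV]
      exact not_lt.1 hbadω
  calc ENNReal.ofReal (Real.exp (-b * V))
      ≤ ENNReal.ofReal (Real.exp (-((#A * ax + #(B \ A) * ay) * v))) -
          ENNReal.ofReal (Real.exp (-b * V)) := by
        simpa only [neg_mul] using ENNReal.ofReal_exp_neg_le_sub (by linarith)
    _ ≤ P good - P bad := tsub_le_tsub hgood hbad
    _ ≤ P (good \ bad) := le_measure_sdiff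
    _ ≤ _ := measure_mono hincl

theorem ofReal_exp_le_measure_closedBall_of_card_ge (hB : B.Nonempty)
    (hind : iIndepFun X P) (hid : ∀ i, IdentDistrib (X i) Y P P) (ht0 : 0 ≤ t) (ht1 : t ≤ 1)
    (hax : 0 ≤ ax) (hay : 0 ≤ ay) (hv : 0 < v) (hvw : v ≤ w) (hV : V = #B * w)
    (hpx : ENNReal.ofReal (Real.exp (-ax * v)) ≤ P {ω | v⁻¹ • Y ω ∈ Metric.ball x ε})
    (hpy : ENNReal.ofReal (Real.exp (-ay * v)) ≤ P {ω | v⁻¹ • Y ω ∈ Metric.ball y ε})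
    (hbad : P {ω | ε * V < ‖Z ω - ∑ i ∈ B, X i ω‖} ≤ ENNReal.ofReal (Real.exp (-b * V)))
    (hρ : (1 - v / w) * ‖t • x + (1 - t) • y‖ ≤ ε) (hN₁ : ‖x - y‖ ≤ #B * ε)
    (hN₂ : ay * w + 1 ≤ #B * ((b - (t * ax + (1 - t) * ay)) * w)) :
    ENNReal.ofReal (Real.exp (-b * V)) ≤
      P {ω | V⁻¹ • Z ω ∈ Metric.closedBall (t • x + (1 - t) • y) (4 * ε)} := by
  have hN : (0 : ℝ) < #B := by exact_mod_cast hB.card_pos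
  obtain ⟨A, hAB, hA⟩ := Finset.exists_subset_card_eq (s := B) (n := ⌊t * #B⌋₊)
    (Nat.floor_le_of_le (mul_le_of_le_one_left hN.le ht1))
  refine ofReal_exp_le_measure_closedBall_of_blocks hAB hB hind hid hv hvw hV hpx hpy hbad ?_ hρ ?_
  · have hcomb := floor_mul_mul_add_sub_mul_le ht0 hN.le hax hay
    have hL : 0 ≤ #B * (t * ax + (1 - t) * ay) + ay := by
      have : 0 ≤ 1 - t := by linarith
      positivity
    rw [Finset.card_sdiff_of_subset hAB, Nat.cast_sub (Finset.card_le_card hAB), hA, hV]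
    nlinarith [mul_le_mul_of_nonneg_right hcomb hv.le, mul_le_mul_of_nonneg_left hvw hL]
  · rw [hA]
    calc _ ≤ (#B : ℝ)⁻¹ * ‖x - y‖ := by
          gcongr
          exact abs_floor_mul_div_sub_le ht0 hN
      _ ≤ ε := by rwa [inv_mul_le_iff₀ hN]

end Blocks

theorem vol_pos {d n : ℕ} (hn : 1 ≤ n) : 0 < vol d n := by
  unfold vol
  have : (1 : ℝ) ≤ n := by exact_mod_cast hn
  positivity

theorem eventually_vol_pos (d : ℕ) : ∀ᶠ n in atTop, 0 < vol d n :=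
  (eventually_ge_atTop 1).mono fun _ => vol_pos

theorem vol_mono (d : ℕ) : Monotone (vol d) := fun a b hab => by
  unfold vol
  gcongr

theorem tendsto_vol_sub_div_vol (d r : ℕ) :
    Tendsto (fun k => vol d (k - r) / vol d k) atTop (𝓝 1) := by
  have hratio : Tendsto (fun k : ℕ => ((k - r : ℕ) : ℝ) / k) atTop (𝓝 1) := by
    refine ((tendsto_natCast_div_add_atTop (r : ℝ)).comp (tendsto_sub_atTop_nat r)).congr' ?_
    filter_upwards [eventually_ge_atTop r] with k hk
    simp [Nat.cast_sub hk]
  simpa [vol, ← div_pow, mul_div_mul_left] using hratio.pow d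

theorem card_box (d m : ℕ) : #(box d m) = (2 * m + 1) ^ d := by
  simp only [box, Fintype.card_piFinset, Int.card_Icc, Finset.prod_const, Finset.card_univ,
    Fintype.card_fin]
  congr 1
  omega

theorem box_nonempty (d m : ℕ) : (box d m).Nonempty :=
  Finset.card_pos.1 (by rw [card_box]; positivity)

theorem tendsto_card_box {d : ℕ} (hd : 1 ≤ d) :
    Tendsto (fun m => (#(box d m) : ℝ)) atTop atTop := by
  refine tendsto_natCast_atTop_atTop.comp (tendsto_atTop_mono (fun m => ?_) tendsto_id)
  rw [card_box]
  exact (Nat.le_succ_of_le (Nat.le_mul_of_pos_left m two_pos)).trans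
    (Nat.le_self_pow (by omega) _)

theorem vol_odd_mul (d m k : ℕ) : vol d ((2 * m + 1) * k) = #(box d m) * vol d k := by
  simp only [card_box, vol, Nat.cast_pow, ← mul_pow]
  push_cast
  ring

theorem ExpNAWitness.frequently_ofReal_exp_le_measure_closedBall {d h r : ℕ} (hd : 1 ≤ d)
    {P : Measure Ω} {S : ℕ → Ω → EuclideanSpace ℝ (Fin h)}
    {T : ℕ → (Fin d → ℤ) → Ω → EuclideanSpace ℝ (Fin h)} (hW : ExpNAWitness d h P S r T)
    {I : EuclideanSpace ℝ (Fin h) → ℝ≥0∞}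
    (hldp : IsLDP P (vol d) (fun n ω => (vol d n)⁻¹ • S n ω) I)
    {x y : EuclideanSpace ℝ (Fin h)} {t ax ay b ε : ℝ} (ht0 : 0 ≤ t) (ht1 : t ≤ 1)
    (hx : I x < ENNReal.ofReal ax) (hy : I y < ENNReal.ofReal ay)
    (hb : t * ax + (1 - t) * ay < b) (hε : 0 < ε) :
    ∃ᶠ n in atTop, ENNReal.ofReal (Real.exp (-b * vol d n)) ≤
      P {ω | (vol d n)⁻¹ • S n ω ∈ Metric.closedBall (t • x + (1 - t) • y) (4 * ε)} := by
  obtain ⟨hind, hid, hNA⟩ := hW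
  have hax : 0 < ax := ENNReal.ofReal_pos.1 (zero_le.trans_lt hx)
  have hay : 0 < ay := ENNReal.ofReal_pos.1 (zero_le.trans_lt hy)
  obtain ⟨K, hrK, hK⟩ := hNA ε hε b (by nlinarith)
  have hblock := (tendsto_sub_atTop_nat r).eventually
    ((hldp.eventually_ofReal_exp_le (eventually_vol_pos d) Metric.isOpen_ball
      (Metric.mem_ball_self hε) hx).and
    (hldp.eventually_ofReal_exp_le (eventually_vol_pos d) Metric.isOpen_ball
      (Metric.mem_ball_self hε) hy))
  have hρ : ∀ᶠ k in atTop, (1 - vol d (k - r) / vol d k) * ‖t • x + (1 - t) • y‖ < ε :=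
    Tendsto.eventually_lt_const hε <| by
      simpa using ((tendsto_const_nhds (x := (1 : ℝ))).sub
        (tendsto_vol_sub_div_vol d r)).mul_const ‖t • x + (1 - t) • y‖
  obtain ⟨k, hKk, ⟨hpx, hpy⟩, hρk⟩ := ((eventually_ge_atTop K).and (hblock.and hρ)).exists
  have hkr : 1 ≤ k - r := by omega
  have hv : 0 < vol d (k - r) := vol_pos hkr
  have hvw : vol d (k - r) ≤ vol d k := vol_mono d (Nat.sub_le k r)
  have hn : Tendsto (fun m => (2 * m + 1) * k) atTop atTop :=
    tendsto_atTop_mono (fun m => (by omega : m ≤ 2 * m + 1).trans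
      (Nat.le_mul_of_pos_right _ (by omega))) tendsto_id
  refine hn.frequently (Eventually.frequently ?_)
  filter_upwards [eventually_ge_atTop 1,
    (tendsto_card_box hd).eventually_ge_atTop (‖x - y‖ / ε),
    (tendsto_card_box hd).eventually_ge_atTop
      ((ay * vol d k + 1) / ((b - (t * ax + (1 - t) * ay)) * vol d k))] with m hm hN₁ hN₂
  refine ofReal_exp_le_measure_closedBall_of_card_ge (box_nonempty d m) (hind _ hkr) (hid _ hkr)
    ht0 ht1 hax.le hay.le hv hvw (vol_odd_mul d m k) hpx hpy (hK k hKk m hm) hρk.le ?_ ?_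
  · rwa [div_le_iff₀ hε] at hN₁
  · rwa [div_le_iff₀ (by nlinarith [hv.trans_le hvw])] at hN₂

theorem rate_convex_of_expNearlyAdditive
    (d h : ℕ) (hd : 1 ≤ d)
    (P : Measure Ω)
    (S : ℕ → Ω → EuclideanSpace ℝ (Fin h))
    (hadd : ExpNearlyAdditive d h P S)
    (I : EuclideanSpace ℝ (Fin h) → ℝ≥0∞)
    (hldp : IsLDP P (vol d) (fun n ω => (vol d n)⁻¹ • S n ω) I) :
    ENNConvex I := by
  intro x y t ht0 ht1
  obtain ⟨r, T, hW⟩ := hadd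
  refine ENNReal.le_ofReal_mul_add_ofReal_mul ht0 ht1 fun ax ay b hx hy hb => ?_
  refine hldp.1.le_of_forall_iInf_closedBall_le fun δ hδ => ?_
  refine hldp.iInf_le_of_frequently (eventually_vol_pos d) Metric.isClosed_closedBall ?_
  have := hW.frequently_ofReal_exp_le_measure_closedBall hd hldp ht0.le ht1.le hx hy hb
    (ε := δ / 4) (by positivity)
  rwa [mul_div_cancel₀ δ four_ne_zero] at this

end RandomCubical
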